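/- arXiv:1805.06537 — 2 statements merged into one kernel-verified Lean document; each statement's English description precedes it below -/
import Mathlib

section
/- For a continuous function y on [0,b] and α > 0, applying the Riemann–Liouville fractional integral of order α to the Caputo fractional derivative of order α ∈ (0,1) of a continuously differentiable function x recovers x up to its initial value: (I^α (D^α_C x))(t) = x(t) − x(0) for all t ∈ [0,b]. -/
open intervalIntegral Real

/-- The left Riemann–Liouville fractional integral of order `α`. -/
noncomputable def fracInt (α : ℝ) (y : ℝ → ℝ) (x : ℝ) : ℝ :=
  (1 / Real.Gamma α) * ∫ t in (0:ℝ)..x, (x - t) ^ (α - 1) * y t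

/-- The left Caputo fractional derivative of order `α ∈ (0,1)`. -/
noncomputable def caputoDeriv (α : ℝ) (x : ℝ → ℝ) (t : ℝ) : ℝ :=
  (1 / Real.Gamma (1 - α)) * ∫ s in (0:ℝ)..t, (t - s) ^ (-α) * deriv x s

/-!
The Caputo derivative is the Riemann–Liouville integral of the derivative,
`D^α_C x = I^{1-α} x'`, so the claim is `I^α I^{1-α} x' = I^1 x' = x t - x 0`.
The semigroup law `I^α I^β = I^{α+β}` comes from Dirichlet's formula: exchanging the
order of integration over the triangle `0 ≤ u ≤ s ≤ t` leaves the inner integral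
`∫ s in u..t, (t - s)^(α-1) (s - u)^(β-1) = B(α, β) (t - u)^(α+β-1)`, a scaled Beta integral.
-/

open MeasureTheory Set

theorem integral_rpow_mul_sub_rpow {p q a : ℝ} (hp : 0 < p) (hq : 0 < q) (ha : 0 < a) :
    ∫ x in (0:ℝ)..a, x ^ (p - 1) * (a - x) ^ (q - 1) =
      Gamma p * Gamma q / Gamma (p + q) * a ^ (p + q - 1) := by
  have hbeta := Complex.Gamma_mul_Gamma_eq_betaIntegral (s := p) (t := q) (by simpa) (by simpa)
  have hcast : ((∫ x in (0:ℝ)..a, x ^ (p - 1) * (a - x) ^ (q - 1) : ℝ) : ℂ) =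
      ∫ x in (0:ℝ)..a, (x : ℂ) ^ ((p : ℂ) - 1) * ((a : ℂ) - x) ^ ((q : ℂ) - 1) := by
    rw [← intervalIntegral.integral_ofReal]
    refine integral_congr fun x hx => ?_
    rw [uIcc_of_le ha.le] at hx
    push_cast [Complex.ofReal_cpow hx.1, Complex.ofReal_cpow (sub_nonneg.2 hx.2)]
    rfl
  have hΓ : Complex.Gamma (p + q) ≠ 0 := by
    rw [← Complex.ofReal_add, Complex.Gamma_ofReal]
    exact_mod_cast (Gamma_pos_of_pos (add_pos hp hq)).ne'
  apply Complex.ofReal_injective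
  push_cast [hcast, Complex.betaIntegral_scaled _ _ ha, ← Complex.Gamma_ofReal, hbeta,
    Complex.ofReal_cpow ha.le]
  field_simp

theorem integral_sub_rpow_mul_sub_rpow {α β u t : ℝ} (hα : 0 < α) (hβ : 0 < β) (hut : u < t) :
    ∫ s in u..t, (t - s) ^ (α - 1) * (s - u) ^ (β - 1) =
      Gamma α * Gamma β / Gamma (α + β) * (t - u) ^ (α + β - 1) := by
  have hshift := integral_comp_sub_right (a := u) (b := t)
    (fun x => x ^ (β - 1) * (t - u - x) ^ (α - 1)) u
  simp only [sub_self, sub_sub_sub_cancel_right] at hshift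
  rw [mul_comm (Gamma α), add_comm α, ← integral_rpow_mul_sub_rpow hβ hα (sub_pos.2 hut),
    ← hshift]
  exact integral_congr fun s _ => mul_comm _ _

theorem intervalIntegrable_sub_rpow_mul_sub_rpow {α β u t : ℝ} (hα : 0 < α) (hβ : 0 < β)
    (hut : u < t) :
    IntervalIntegrable (fun s => (t - s) ^ (α - 1) * (s - u) ^ (β - 1)) volume u t := by
  -- a non-integrable function has Bochner integral `0`, and this one's is positive
  refine intervalIntegrable_of_integral_ne_zero ?_
  rw [integral_sub_rpow_mul_sub_rpow hα hβ hut]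
  have := Gamma_pos_of_pos hα
  have := Gamma_pos_of_pos hβ
  have := Gamma_pos_of_pos (add_pos hα hβ)
  have := rpow_pos_of_pos (sub_pos.2 hut) (α + β - 1)
  positivity

section Triangle

variable {E : Type*} [NormedAddCommGroup E] {t : ℝ}

def lowerTriangle (t : ℝ) : Set (ℝ × ℝ) := {p | 0 ≤ p.2 ∧ p.2 ≤ p.1 ∧ p.1 ≤ t}

theorem measurableSet_lowerTriangle (t : ℝ) : MeasurableSet (lowerTriangle t) :=
  (measurableSet_le measurable_const measurable_snd).inter
    ((measurableSet_le measurable_snd measurable_fst).inter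
      (measurableSet_le measurable_fst measurable_const))

theorem indicator_lowerTriangle_apply_left (G : ℝ × ℝ → E) {s : ℝ} (hs : s ∈ Icc 0 t)
    (u : ℝ) :
    (lowerTriangle t).indicator G (s, u) = (Icc 0 s).indicator (fun u => G (s, u)) u := by
  simp only [indicator_apply, lowerTriangle, mem_ofPred_eq, mem_Icc, hs.2, and_true]

theorem indicator_lowerTriangle_apply_right (G : ℝ × ℝ → E) {u : ℝ} (hu : u ∈ Icc 0 t)
    (s : ℝ) :
    (lowerTriangle t).indicator G (s, u) = (Icc u t).indicator (fun s => G (s, u)) s := by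
  simp only [indicator_apply, lowerTriangle, mem_ofPred_eq, mem_Icc, hu.1, true_and]

theorem indicator_lowerTriangle_eq_zero_left (G : ℝ × ℝ → E) {s : ℝ} (hs : s ∉ Icc 0 t)
    (u : ℝ) :
    (lowerTriangle t).indicator G (s, u) = 0 :=
  indicator_of_notMem (fun h => hs ⟨h.1.trans h.2.1, h.2.2⟩) _

theorem indicator_lowerTriangle_eq_zero_right (G : ℝ × ℝ → E) {u : ℝ} (hu : u ∉ Icc 0 t)
    (s : ℝ) :
    (lowerTriangle t).indicator G (s, u) = 0 :=
  indicator_of_notMem (fun h => hu ⟨h.1, h.2.1.trans h.2.2⟩) _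

theorem setIntegral_Icc_eq_intervalIntegral [NormedSpace ℝ E] {f : ℝ → E} {a b : ℝ}
    (hab : a ≤ b) :
    ∫ x in Icc a b, f x = ∫ x in a..b, f x := by
  rw [integral_Icc_eq_integral_Ioc, integral_of_le hab]

theorem integral_indicator_lowerTriangle_left [NormedSpace ℝ E] (G : ℝ × ℝ → E) (s : ℝ) :
    ∫ u, (lowerTriangle t).indicator G (s, u) =
      (Icc 0 t).indicator (fun s => ∫ u in 0..s, G (s, u)) s := by
  by_cases hs : s ∈ Icc 0 t
  · simp only [indicator_lowerTriangle_apply_left G hs, indicator_of_mem hs,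
      MeasureTheory.integral_indicator measurableSet_Icc, setIntegral_Icc_eq_intervalIntegral hs.1]
  · simp only [indicator_lowerTriangle_eq_zero_left G hs, indicator_of_notMem hs,
      MeasureTheory.integral_zero]

theorem integral_indicator_lowerTriangle_right [NormedSpace ℝ E] (G : ℝ × ℝ → E) (u : ℝ) :
    ∫ s, (lowerTriangle t).indicator G (s, u) =
      (Icc 0 t).indicator (fun u => ∫ s in u..t, G (s, u)) u := by
  by_cases hu : u ∈ Icc 0 t
  · simp only [indicator_lowerTriangle_apply_right G hu, indicator_of_mem hu,
      MeasureTheory.integral_indicator measurableSet_Icc, setIntegral_Icc_eq_intervalIntegral hu.2]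
  · simp only [indicator_lowerTriangle_eq_zero_right G hu, indicator_of_notMem hu,
      MeasureTheory.integral_zero]

theorem integrableOn_lowerTriangle {G : ℝ × ℝ → E} (hG : AEStronglyMeasurable G)
    (hslice : ∀ u ∈ Icc 0 t, IntervalIntegrable (fun s => G (s, u)) volume u t)
    (hnorm : IntervalIntegrable (fun u => ∫ s in u..t, ‖G (s, u)‖) volume 0 t) (ht : 0 ≤ t) :
    IntegrableOn G (lowerTriangle t) := by
  rw [← integrable_indicator_iff (measurableSet_lowerTriangle t), Measure.volume_eq_prod,
    integrable_prod_iff' (hG.indicator (measurableSet_lowerTriangle t))]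
  refine ⟨ae_of_all _ fun u => ?_, ?_⟩
  · by_cases hu : u ∈ Icc 0 t
    · simp only [indicator_lowerTriangle_apply_right G hu]
      exact ((intervalIntegrable_iff_integrableOn_Icc_of_le hu.2).1
        (hslice u hu)).integrable_indicator measurableSet_Icc
    · simp only [indicator_lowerTriangle_eq_zero_right G hu]
      exact integrable_zero _ _ _
  · simp only [norm_indicator_eq_indicator_norm, integral_indicator_lowerTriangle_right]
    exact ((intervalIntegrable_iff_integrableOn_Icc_of_le ht).1 hnorm).integrable_indicator
      measurableSet_Icc

theorem integral_integral_lowerTriangle_swap [NormedSpace ℝ E] {G : ℝ × ℝ → E}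
    (hG : IntegrableOn G (lowerTriangle t)) (ht : 0 ≤ t) :
    ∫ s in 0..t, ∫ u in 0..s, G (s, u) = ∫ u in 0..t, ∫ s in u..t, G (s, u) := by
  have hswap := integral_integral_swap (f := fun s u => (lowerTriangle t).indicator G (s, u))
    ((integrable_indicator_iff (measurableSet_lowerTriangle t)).2 hG)
  simpa only [integral_indicator_lowerTriangle_left, integral_indicator_lowerTriangle_right,
    MeasureTheory.integral_indicator measurableSet_Icc, setIntegral_Icc_eq_intervalIntegral ht]
    using hswap

end Triangle

theorem integrableOn_lowerTriangle_rpow_mul {α β : ℝ} (hα : 0 < α) (hβ : 0 < β) {y : ℝ → ℝ}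
    (hy : Continuous y) {t : ℝ} (ht : 0 ≤ t) :
    IntegrableOn (fun p : ℝ × ℝ => (t - p.1) ^ (α - 1) * (p.1 - p.2) ^ (β - 1) * y p.2)
      (lowerTriangle t) := by
  have hnorm : ∀ u ∈ Ioo 0 t, ∫ s in u..t, ‖(t - s) ^ (α - 1) * (s - u) ^ (β - 1) * y u‖ =
      Gamma α * Gamma β / Gamma (α + β) * ((t - u) ^ (α + β - 1) * ‖y u‖) := by
    intro u hu
    rw [← mul_assoc, ← integral_sub_rpow_mul_sub_rpow hα hβ hu.2,
      ← intervalIntegral.integral_mul_const]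
    refine integral_congr fun s hs => ?_
    rw [uIcc_of_le hu.2.le] at hs
    rw [norm_mul, norm_mul, norm_of_nonneg (rpow_nonneg (sub_nonneg.2 hs.2) _),
      norm_of_nonneg (rpow_nonneg (sub_nonneg.2 hs.1) _)]
  have hkernel : IntervalIntegrable (fun u => (t - u) ^ (α + β - 1)) volume 0 t := by
    simpa using (intervalIntegrable_rpow' (by linarith : -1 < α + β - 1)
      (a := t) (b := 0)).comp_sub_left t
  refine integrableOn_lowerTriangle (by fun_prop) (fun u hu => ?_) ?_ ht
  · rcases hu.2.eq_or_lt with rfl | hut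
    · exact IntervalIntegrable.refl
    · exact (intervalIntegrable_sub_rpow_mul_sub_rpow hα hβ hut).mul_const (y u)
  · rw [intervalIntegrable_iff_integrableOn_Ioo_of_le ht]
    refine IntegrableOn.congr_fun ?_ (fun u hu => (hnorm u hu).symm) measurableSet_Ioo
    exact (intervalIntegrable_iff_integrableOn_Ioo_of_le ht).1
      ((hkernel.mul_continuousOn hy.norm.continuousOn).const_mul _)

theorem fracInt_fracInt {α β : ℝ} (hα : 0 < α) (hβ : 0 < β) {y : ℝ → ℝ} (hy : Continuous y)
    {t : ℝ} (ht : 0 ≤ t) :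
    fracInt α (fracInt β y) t = fracInt (α + β) y t := by
  set B := Gamma α * Gamma β / Gamma (α + β) with hB
  have hinner : ∀ u ∈ Ioo 0 t, ∫ s in u..t, (t - s) ^ (α - 1) * (s - u) ^ (β - 1) * y u =
      B * ((t - u) ^ (α + β - 1) * y u) := by
    intro u hu
    rw [intervalIntegral.integral_mul_const, integral_sub_rpow_mul_sub_rpow hα hβ hu.2, mul_assoc]
  calc fracInt α (fracInt β y) t
      = (Gamma α * Gamma β)⁻¹ *
          ∫ s in 0..t, ∫ u in 0..s, (t - s) ^ (α - 1) * (s - u) ^ (β - 1) * y u := by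
        simp only [fracInt, ← intervalIntegral.integral_const_mul]
        refine integral_congr fun s _ => integral_congr fun u _ => ?_
        ring
    _ = (Gamma α * Gamma β)⁻¹ *
          ∫ u in 0..t, ∫ s in u..t, (t - s) ^ (α - 1) * (s - u) ^ (β - 1) * y u :=
        congrArg _ (integral_integral_lowerTriangle_swap
          (integrableOn_lowerTriangle_rpow_mul hα hβ hy ht) ht)
    _ = (Gamma α * Gamma β)⁻¹ * ∫ u in 0..t, B * ((t - u) ^ (α + β - 1) * y u) := by
        rw [integral_congr_Ioo_of_le ht hinner]
    _ = fracInt (α + β) y t := by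
        have := (Gamma_pos_of_pos hα).ne'
        have := (Gamma_pos_of_pos hβ).ne'
        rw [intervalIntegral.integral_const_mul, fracInt, ← mul_assoc, hB]
        field_simp

theorem fracInt_one (y : ℝ → ℝ) (t : ℝ) : fracInt 1 y t = ∫ s in 0..t, y s := by
  simp [fracInt]

theorem caputoDeriv_eq_fracInt_deriv (α : ℝ) (x : ℝ → ℝ) :
    caputoDeriv α x = fracInt (1 - α) (deriv x) := by
  ext t
  simp only [caputoDeriv, fracInt, sub_sub_cancel_left]

theorem fracInt_caputoDeriv_general (α b : ℝ) (hα : 0 < α) (hα1 : α < 1)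
    (x : ℝ → ℝ) (hx : ContDiff ℝ 1 x) :
    ∀ t ∈ Set.Icc (0:ℝ) b, fracInt α (caputoDeriv α x) t = x t - x 0 := by
  intro t ht
  have hx' : Continuous (deriv x) := hx.continuous_deriv le_rfl
  rw [caputoDeriv_eq_fracInt_deriv, fracInt_fracInt hα (sub_pos.2 hα1) hx' ht.1,
    add_sub_cancel, fracInt_one, integral_deriv_eq_sub
      (fun s _ => (hx.differentiable one_ne_zero).differentiableAt) (hx'.intervalIntegrable 0 t)]

theorem fracInt_caputoDeriv (α b : ℝ) (hα : 0 < α) (hα1 : α < 1) (hb : 0 < b)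
    (x : ℝ → ℝ) (hx : ContDiff ℝ 1 x) :
    ∀ t ∈ Set.Icc (0:ℝ) b, fracInt α (caputoDeriv α x) t = x t - x 0 :=
  fracInt_caputoDeriv_general α b hα hα1 x hx
end

section
/- The trapezoidal fractional quadrature formula is exact for linear functions: for y(x) = x and every i ≥ 1, ∑_{j=0}^{i} ᵀϖ_{ij}^{(α)} · (jh) = (1/Γ(α)) ∫₀^{ih} (ih − t)^{α−1} t dt = (ih)^{α+1}/Γ(α+2). -/
/-!
Away from the endpoints the weights are `h^α/Γ(α+2)` times second differences of
`n ↦ n^(α+1)`, so against the nodal values `j h` a summation by parts collapses the quadrature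
sum to `h^(α+1) i^(α+1)/Γ(α+2)`; the weight at `j = 0` only meets the value `0`.
After `t ↦ ih - t` the integral becomes `∫₀^{ih} (ih s^(α-1) - s^α) ds`, which is elementary.
-/

open Real Finset

/-- The trapezoidal fractional integration weights. -/
noncomputable def trapW (α h : ℝ) (i j : ℕ) : ℝ :=
  if i = 0 then 0
  else if j = 0 then
    h ^ α / Real.Gamma (α + 2) * (((i : ℝ) - 1) ^ (α + 1) - ((i : ℝ) - 1 - α) * (i : ℝ) ^ α)
  else if j = i then h ^ α / Real.Gamma (α + 2)
  else if j < i then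
    h ^ α / Real.Gamma (α + 2) *
      (((i : ℝ) - (j : ℝ) + 1) ^ (α + 1) + ((i : ℝ) - (j : ℝ) - 1) ^ (α + 1)
        - 2 * ((i : ℝ) - (j : ℝ)) ^ (α + 1))
  else 0

section SecondDifference

variable {R : Type*} [CommRing R]

theorem sum_range_sub_mul_second_diff (g : ℕ → R) (m : ℕ) :
    ∑ k ∈ range m, ((m : R) - k) * (g (k + 2) - 2 * g (k + 1) + g k) =
      g (m + 1) - g 0 - (m + 1) * (g 1 - g 0) := by
  induction m with
  | zero => simp
  | succ m ih =>
    have telescope : ∑ k ∈ range (m + 1), (g (k + 2) - 2 * g (k + 1) + g k) =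
        (g (m + 2) - g (m + 1)) - (g 1 - g 0) := by
      rw [← sum_range_sub (fun k => g (k + 1) - g k)]
      exact sum_congr rfl fun k _ => by ring
    calc ∑ k ∈ range (m + 1), (((m + 1 : ℕ) : R) - k) * (g (k + 2) - 2 * g (k + 1) + g k)
        = ∑ k ∈ range (m + 1), ((m : R) - k) * (g (k + 2) - 2 * g (k + 1) + g k) +
            ∑ k ∈ range (m + 1), (g (k + 2) - 2 * g (k + 1) + g k) := by
          rw [← sum_add_distrib]
          exact sum_congr rfl fun k _ => by push_cast; ring
      _ = g (m + 1 + 1) - g 0 - ((m + 1 : ℕ) + 1) * (g 1 - g 0) := by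
          rw [sum_range_succ, ih, telescope]
          push_cast
          ring

theorem sum_range_succ_mul_second_diff_rev (g : ℕ → R) (m : ℕ) :
    ∑ k ∈ range m, ((k : R) + 1) * (g (m - k + 1) + g (m - k - 1) - 2 * g (m - k)) =
      g (m + 1) - g 0 - (m + 1) * (g 1 - g 0) := by
  rw [← sum_range_reflect, ← sum_range_sub_mul_second_diff]
  refine sum_congr rfl fun k hk_mem => ?_
  have hk : k < m := mem_range.mp hk_mem
  rw [show m - (m - 1 - k) = k + 1 by omega, show m - 1 - k = m - (k + 1) by omega,
    Nat.cast_sub hk, show k + 1 + 1 = k + 2 by rfl, show k + 1 - 1 = k by rfl]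
  push_cast
  ring

end SecondDifference

section TrapezoidalWeights

variable {α h : ℝ}

theorem trapW_self {i : ℕ} (hi : i ≠ 0) : trapW α h i i = h ^ α / Gamma (α + 2) := by
  simp [trapW, hi]

theorem trapW_succ_succ {m k : ℕ} (hk : k < m) :
    trapW α h (m + 1) (k + 1) = h ^ α / Gamma (α + 2) *
      (((m - k + 1 : ℕ) : ℝ) ^ (α + 1) + ((m - k - 1 : ℕ) : ℝ) ^ (α + 1)
        - 2 * ((m - k : ℕ) : ℝ) ^ (α + 1)) := by
  rw [trapW, if_neg m.succ_ne_zero, if_neg k.succ_ne_zero, if_neg (by omega), if_pos (by omega),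
    Nat.cast_sub (by omega : 1 ≤ m - k)]
  push_cast [Nat.cast_sub hk.le]
  ring_nf

theorem sum_trapW_mul_node_eq_mul_rpow (hα : α + 1 ≠ 0) (i : ℕ) :
    ∑ j ∈ range (i + 1), trapW α h i j * (j * h) =
      h ^ α / Gamma (α + 2) * h * (i : ℝ) ^ (α + 1) := by
  rcases i with _ | m
  · simp [Real.zero_rpow hα]
  have interior := sum_range_succ_mul_second_diff_rev (fun n : ℕ => (n : ℝ) ^ (α + 1)) m
  simp only [Nat.cast_zero, Nat.cast_one, Real.zero_rpow hα, Real.one_rpow] at interior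
  have interior_weights : ∑ k ∈ range m, trapW α h (m + 1) (k + 1) * ((k + 1 : ℕ) * h) =
      h ^ α / Gamma (α + 2) * h * ∑ k ∈ range m, ((k : ℝ) + 1) *
        (((m - k + 1 : ℕ) : ℝ) ^ (α + 1) + ((m - k - 1 : ℕ) : ℝ) ^ (α + 1)
          - 2 * ((m - k : ℕ) : ℝ) ^ (α + 1)) := by
    rw [mul_sum]
    refine sum_congr rfl fun k hk => ?_
    rw [trapW_succ_succ (mem_range.mp hk)]
    push_cast
    ring
  rw [sum_range_succ, sum_range_succ', trapW_self m.succ_ne_zero, interior_weights, interior]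
  push_cast
  ring

theorem sum_trapW_mul_node (hh : 0 ≤ h) (hα : α + 1 ≠ 0) (i : ℕ) :
    ∑ j ∈ range (i + 1), trapW α h i j * (j * h) = ((i : ℝ) * h) ^ (α + 1) / Gamma (α + 2) := by
  rw [sum_trapW_mul_node_eq_mul_rpow hα, mul_rpow i.cast_nonneg hh, rpow_add_one' hh hα]
  ring

end TrapezoidalWeights

theorem integral_sub_rpow_mul_id {α a : ℝ} (hα : 0 < α) (ha : 0 ≤ a) :
    ∫ t in (0 : ℝ)..a, (a - t) ^ (α - 1) * t = a ^ (α + 1) / (α * (α + 1)) := by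
  have reflected : ∫ t in (0 : ℝ)..a, (a - t) ^ (α - 1) * t =
      ∫ s in (0 : ℝ)..a, (a * s ^ (α - 1) - s ^ α) := by
    have substitution := intervalIntegral.integral_comp_sub_left
      (fun s => a * s ^ (α - 1) - s ^ α) (a := 0) (b := a) a
    rw [sub_self, sub_zero] at substitution
    rw [← substitution]
    refine intervalIntegral.integral_congr fun t ht => ?_
    rw [Set.uIcc_of_le ha] at ht
    have hs : 0 ≤ a - t := sub_nonneg.mpr ht.2
    rw [← sub_add_cancel α 1, rpow_add_one' hs (by simpa using hα.ne'), sub_add_cancel]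
    ring
  have hα₀ : α - 1 + 1 ≠ 0 := by simpa using hα.ne'
  rw [reflected, intervalIntegral.integral_sub
      ((intervalIntegral.intervalIntegrable_rpow' (by linarith)).const_mul a)
      (intervalIntegral.intervalIntegrable_rpow' (by linarith)),
    intervalIntegral.integral_const_mul, integral_rpow (Or.inl (by linarith)),
    integral_rpow (Or.inl (by linarith)), zero_rpow hα₀, zero_rpow (by positivity),
    sub_add_cancel, rpow_add_one' ha (by positivity)]
  field_simp
  ring

theorem Real.Gamma_add_two {s : ℝ} (hs₀ : s ≠ 0) (hs₁ : s + 1 ≠ 0) :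
    Gamma (s + 2) = s * (s + 1) * Gamma s := by
  rw [show s + 2 = s + 1 + 1 by ring, Gamma_add_one hs₁, Gamma_add_one hs₀]
  ring

theorem trapW_exact_for_linear (α h : ℝ) (hα : 0 < α) (hh : 0 < h) :
    ∀ i : ℕ, 1 ≤ i →
      (∑ j ∈ Finset.range (i + 1), trapW α h i j * ((j : ℝ) * h)
          = (1 / Real.Gamma α) * ∫ t in (0:ℝ)..((i : ℝ) * h), ((i : ℝ) * h - t) ^ (α - 1) * t) ∧
      (∑ j ∈ Finset.range (i + 1), trapW α h i j * ((j : ℝ) * h)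
          = ((i : ℝ) * h) ^ (α + 1) / Real.Gamma (α + 2)) := by
  intro i _
  have quadrature := sum_trapW_mul_node hh.le (by positivity : α + 1 ≠ 0) i
  refine ⟨?_, quadrature⟩
  have hΓ : Gamma α ≠ 0 := (Gamma_pos_of_pos hα).ne'
  rw [quadrature, integral_sub_rpow_mul_id hα (by positivity),
    Real.Gamma_add_two hα.ne' (by positivity)]
  field_simp
end
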